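/- arXiv:2302.12306 — 2 statements merged into one kernel-verified Lean document; each statement's English description precedes it below -/
import Mathlib

section
/- (Separation lower bound forces convergent subsequence) Let {u_k} be a sequence in a compact set S₀ ⊆ ℝ^p such that for each t < k, u_k satisfies the gradient-free cut generated at iteration t, i.e., (u_k − z_t)^⊤(u_t − z_t) ≤ 0 where z_t = proj_U(u_t) for a nonempty closed convex U ⊆ S₀. Then the sequence {u_k} has a subsequence {u_{k_p}} converging to some u* ∈ U, i.e., ‖u_{k_p} − z_{k_p}‖ → 0 along some subsequence. -/
/-!
Writing `d t = ‖u t - z t‖`, the cut of iteration `t` says that `u k - z t` makes an obtuse angle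
with `u t - z t`, so `d t ≤ ‖u k - u t‖` for every later `k`. Along a convergent subsequence
(compactness of `S₀`) consecutive terms get arbitrarily close, hence `d → 0` along it; then
`z` converges to the same limit, which lies in the closed set `U`.
-/

open Filter Topology

theorem norm_le_norm_sub_of_inner_nonpos {E : Type*} [NormedAddCommGroup E]
    [InnerProductSpace ℝ E] {a b : E} (h : inner ℝ a b ≤ 0) : ‖b‖ ≤ ‖a - b‖ := by
  have hsq : ‖a - b‖ ^ 2 = ‖a‖ ^ 2 - 2 * inner ℝ a b + ‖b‖ ^ 2 := norm_sub_sq_real a b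
  nlinarith [norm_nonneg a, norm_nonneg b, norm_nonneg (a - b)]

theorem norm_sub_le_dist_of_cut {E : Type*} [NormedAddCommGroup E] [InnerProductSpace ℝ E]
    {x y z : E} (h : inner ℝ (y - z) (x - z) ≤ 0) : ‖x - z‖ ≤ dist x y := by
  simpa [sub_sub_sub_cancel_right, dist_comm x y, dist_eq_norm] using
    norm_le_norm_sub_of_inner_nonpos h

theorem tendsto_zero_of_le_dist_succ {X : Type*} [PseudoMetricSpace X] {v : ℕ → X} {x : X}
    {d : ℕ → ℝ} (hv : Tendsto v atTop (𝓝 x)) (hd₀ : ∀ q, 0 ≤ d q)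
    (hd : ∀ q, d q ≤ dist (v q) (v (q + 1))) : Tendsto d atTop (𝓝 0) := by
  have hsucc : Tendsto (fun q => dist (v q) (v (q + 1))) atTop (𝓝 0) := by
    simpa using hv.dist (hv.comp (tendsto_add_atTop_nat 1))
  exact squeeze_zero hd₀ hd hsucc

theorem Filter.Tendsto.of_norm_sub_tendsto_zero {α E : Type*} [SeminormedAddCommGroup E]
    {l : Filter α} {u z : α → E} {x : E} (hu : Tendsto u l (𝓝 x))
    (huz : Tendsto (fun a => ‖u a - z a‖) l (𝓝 0)) : Tendsto z l (𝓝 x) := by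
  simpa using hu.sub (tendsto_zero_iff_norm_tendsto_zero.2 huz)

theorem cuts_force_convergent_subsequence_general {p : ℕ}
    (S₀ : Set (EuclideanSpace ℝ (Fin p))) (hS₀ : IsCompact S₀)
    (U : Set (EuclideanSpace ℝ (Fin p)))
    (hUcl : IsClosed U)
    (u z : ℕ → EuclideanSpace ℝ (Fin p))
    (huS : ∀ k, u k ∈ S₀)
    (hz : ∀ k, z k ∈ U ∧ ∀ w ∈ U, ‖z k - u k‖ ≤ ‖w - u k‖)
    (hcut : ∀ t k, t < k → (inner ℝ (u k - z t) (u t - z t) : ℝ) ≤ 0) :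
    ∃ φ : ℕ → ℕ, StrictMono φ ∧ ∃ ustar ∈ U,
      Filter.Tendsto (fun q => u (φ q)) Filter.atTop (nhds ustar) ∧
      Filter.Tendsto (fun q => ‖u (φ q) - z (φ q)‖) Filter.atTop (nhds 0) := by
  obtain ⟨ustar, -, φ, hφ, hconv⟩ := hS₀.tendsto_subseq huS
  have hgap : Tendsto (fun q => ‖u (φ q) - z (φ q)‖) atTop (𝓝 0) :=
    tendsto_zero_of_le_dist_succ hconv (fun _ => norm_nonneg _)
      fun q => norm_sub_le_dist_of_cut (hcut _ _ (hφ q.lt_succ_self))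
  have hzconv : Tendsto (fun q => z (φ q)) atTop (𝓝 ustar) :=
    hconv.of_norm_sub_tendsto_zero hgap
  have hmem : ustar ∈ U := hUcl.mem_of_tendsto hzconv (Eventually.of_forall fun q => (hz _).1)
  exact ⟨φ, hφ, ustar, hmem, hconv, hgap⟩

/-- Separation lower bound forces a convergent subsequence: a sequence in a compact set
satisfying the gradient-free cuts of all previous iterations has a subsequence converging
to a point of `U`, along which the projection distances tend to `0`. -/
theorem cuts_force_convergent_subsequence {p : ℕ}
    (S₀ : Set (EuclideanSpace ℝ (Fin p))) (hS₀ : IsCompact S₀)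
    (U : Set (EuclideanSpace ℝ (Fin p)))
    (hUne : U.Nonempty) (hUcl : IsClosed U) (hUcx : Convex ℝ U) (hUS : U ⊆ S₀)
    (u z : ℕ → EuclideanSpace ℝ (Fin p))
    (huS : ∀ k, u k ∈ S₀)
    (hz : ∀ k, z k ∈ U ∧ ∀ w ∈ U, ‖z k - u k‖ ≤ ‖w - u k‖)
    (hcut : ∀ t k, t < k → (inner ℝ (u k - z t) (u t - z t) : ℝ) ≤ 0) :
    ∃ φ : ℕ → ℕ, StrictMono φ ∧ ∃ ustar ∈ U,
      Filter.Tendsto (fun q => u (φ q)) Filter.atTop (nhds ustar) ∧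
      Filter.Tendsto (fun q => ‖u (φ q) - z (φ q)‖) Filter.atTop (nhds 0) :=
  cuts_force_convergent_subsequence_general S₀ hS₀ U hUcl u z huS hz hcut
end

section
/- (KKT of the reformulation yields the robust first-order condition, positive multiplier case) Suppose (x, γ) together with multipliers μ > 0, v, ν ≥ 0 satisfy: ∇f(x) + ∇h(x)v − μ∇b(x) = 0; −Bv + μd − ν = 0; μ(γ^⊤d − b(x)) = 0; ν^⊤γ = 0; γ^⊤d ≤ b(x); γ ≥ 0; B^⊤γ = h(x). Then u := v/μ satisfies Bu ≤ d (i.e., u ∈ S) and u^⊤h(x) = b(x), and ∇f(x) + μ(∇h(x)u − ∇b(x)) = 0. -/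
open Matrix

/-!
The multiplier `μ` of the robust constraint scales the dual variable `v` of the reformulation:
`u := v / μ`. The second KKT equation reads `B v = μ d - ν` with `ν ≥ 0`, so `B u ≤ d`.
Pairing it with `γ` and using `ν ⬝ᵥ γ = 0` and `Bᵀ γ = h(x)` gives `v ⬝ᵥ h(x) = μ (γ ⬝ᵥ d)`,
and `γ ⬝ᵥ d = b(x)` by complementary slackness with `μ ≠ 0`. The stationarity equation is
unchanged by the rescaling.
-/

section

variable {𝕜 ι κ : Type*} [Field 𝕜] [LinearOrder 𝕜] [IsStrictOrderedRing 𝕜]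
  [Fintype κ] (B : Matrix ι κ 𝕜)

theorem mulVec_inv_smul_le_of_mulVec_eq_smul_sub {μ : 𝕜} (hμ : 0 < μ) {v : κ → 𝕜}
    {d ν : ι → 𝕜} (hν : ∀ i, 0 ≤ ν i) (hBv : B *ᵥ v = μ • d - ν) (i : ι) :
    (B *ᵥ (μ⁻¹ • v)) i ≤ d i := by
  have hcomp : (B *ᵥ (μ⁻¹ • v)) i = d i - μ⁻¹ * ν i := by
    rw [mulVec_smul, Pi.smul_apply, hBv, Pi.sub_apply, Pi.smul_apply, smul_eq_mul,
      smul_eq_mul, mul_sub, inv_mul_cancel_left₀ hμ.ne']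
  rw [hcomp]
  exact sub_le_self _ (mul_nonneg (inv_nonneg.mpr hμ.le) (hν i))

end

theorem dotProduct_transpose_mulVec_eq_smul_dotProduct {R ι κ : Type*} [CommRing R]
    [Fintype ι] [Fintype κ] (B : Matrix ι κ R) {μ : R} {v : κ → R} {d ν γ : ι → R}
    (hBv : B *ᵥ v = μ • d - ν) (hνγ : ν ⬝ᵥ γ = 0) :
    v ⬝ᵥ Bᵀ *ᵥ γ = μ * (γ ⬝ᵥ d) := by
  rw [dotProduct_mulVec, vecMul_transpose, hBv, sub_dotProduct, hνγ, sub_zero,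
    smul_dotProduct, smul_eq_mul, dotProduct_comm]

theorem add_smul_mulVec_inv_smul_sub {𝕜 ι κ : Type*} [Field 𝕜] [Fintype κ]
    (J : Matrix ι κ 𝕜) {μ : 𝕜} (hμ : μ ≠ 0) (g c : ι → 𝕜) (v : κ → 𝕜) :
    g + μ • (J *ᵥ (μ⁻¹ • v) - c) = g + J *ᵥ v - μ • c := by
  rw [mulVec_smul, smul_sub, smul_smul, mul_inv_cancel₀ hμ, one_smul, add_sub_assoc]

/-- Notation: `∇f(x) = gradf`, `∇h(x) = Jh`, `∇b(x) = gradb`, `h(x) = hx`, `b(x) = bx`. -/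
theorem kkt_reformulation_positive_multiplier_general {n m p : ℕ}
    (B : Matrix (Fin m) (Fin p) ℝ) (d : Fin m → ℝ)
    (gradf gradb : Fin n → ℝ) (Jh : Matrix (Fin n) (Fin p) ℝ)
    (hx : Fin p → ℝ) (bx : ℝ)
    (μ : ℝ) (hμ : 0 < μ) (v : Fin p → ℝ) (ν : Fin m → ℝ) (hν : ∀ i, 0 ≤ ν i)
    (γ : Fin m → ℝ)
    (kkt1 : gradf + Jh.mulVec v - μ • gradb = 0)
    (kkt2 : -B.mulVec v + μ • d - ν = 0)
    (kkt3 : μ * (γ ⬝ᵥ d - bx) = 0)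
    (kkt4 : ν ⬝ᵥ γ = 0)
    (kkt6 : B.transpose.mulVec γ = hx) :
    (∀ i, B.mulVec (μ⁻¹ • v) i ≤ d i) ∧
    (μ⁻¹ • v) ⬝ᵥ hx = bx ∧
    gradf + μ • (Jh.mulVec (μ⁻¹ • v) - gradb) = 0 := by
  have hBv : B *ᵥ v = μ • d - ν := by
    rw [← sub_eq_zero, ← neg_eq_zero, ← kkt2]
    abel
  have hγd : γ ⬝ᵥ d = bx :=
    sub_eq_zero.mp ((mul_eq_zero.mp kkt3).resolve_left hμ.ne')
  refine ⟨mulVec_inv_smul_le_of_mulVec_eq_smul_sub B hμ hν hBv, ?_, ?_⟩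
  · rw [smul_dotProduct, ← kkt6, dotProduct_transpose_mulVec_eq_smul_dotProduct B hBv kkt4,
      hγd, smul_eq_mul, inv_mul_cancel_left₀ hμ.ne']
  · rw [add_smul_mulVec_inv_smul_sub Jh hμ.ne', kkt1]

/-- KKT conditions of the dual reformulation yield the robust first-order condition
(positive multiplier case): with `∇f(x) = gradf`, Jacobian `∇h(x) = Jh`, `∇b(x) = gradb`,
`h(x) = hx`, `b(x) = bx`, the KKT system implies `u := v/μ ∈ S`, `uᵀ h(x) = b(x)`, and
`∇f(x) + μ(∇h(x) u − ∇b(x)) = 0`. -/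
theorem kkt_reformulation_positive_multiplier {n m p : ℕ}
    (B : Matrix (Fin m) (Fin p) ℝ) (d : Fin m → ℝ)
    (gradf gradb : Fin n → ℝ) (Jh : Matrix (Fin n) (Fin p) ℝ)
    (hx : Fin p → ℝ) (bx : ℝ)
    (μ : ℝ) (hμ : 0 < μ) (v : Fin p → ℝ) (ν : Fin m → ℝ) (hν : ∀ i, 0 ≤ ν i)
    (γ : Fin m → ℝ) (hγ : ∀ i, 0 ≤ γ i)
    (kkt1 : gradf + Jh.mulVec v - μ • gradb = 0)
    (kkt2 : -B.mulVec v + μ • d - ν = 0)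
    (kkt3 : μ * (γ ⬝ᵥ d - bx) = 0)
    (kkt4 : ν ⬝ᵥ γ = 0)
    (kkt5 : γ ⬝ᵥ d ≤ bx)
    (kkt6 : B.transpose.mulVec γ = hx) :
    (∀ i, B.mulVec (μ⁻¹ • v) i ≤ d i) ∧
    (μ⁻¹ • v) ⬝ᵥ hx = bx ∧
    gradf + μ • (Jh.mulVec (μ⁻¹ • v) - gradb) = 0 :=
  kkt_reformulation_positive_multiplier_general B d gradf gradb Jh hx bx μ hμ v ν hν γ kkt1 kkt2
    kkt3 kkt4 kkt6
end
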